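/- Closing substitution lemma: if Γ' ⊢ σ (σ maps each variable declared in Γ' to a closed value of the declared type, or to itself) and Γ, Γ' ⊢ e : T, then Γ ⊢ σ(e) : T. -/
import Mathlib


/-! Classic Contract PCF (CPCF_C): simply typed PCF with general recursion,
    errors, and contract monitors.  Predicate contracts carry an explicit
    delayed closing substitution (environment). -/

inductive Ty where
  | bool | int
  | arrow : Ty → Ty → Ty
deriving DecidableEq

inductive Const where
  | int : Int → Const
  | bool : Bool → Const
deriving DecidableEq

def Const.ty : Const → Ty
  | .int _ => .int
  | .bool _ => .bool

def Ty.IsBase : Ty → Prop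
  | .bool => True
  | .int => True
  | .arrow _ _ => False

abbrev Label := String
abbrev Vr := String

mutual
/-- Terms of classic CPCF. -/
inductive Tm where
  | var : Vr → Tm
  | const : Const → Tm
  | lam : Vr → Ty → Tm → Tm
  | app : Tm → Tm → Tm
  | fix : Vr → Ty → Tm → Tm
  | ite : Tm → Tm → Tm → Tm
  | err : Label → Tm
  | mon : Label → Ctr → Tm → Tm
/-- Contracts: predicate contracts `pred_σ(e)` with a delayed closing
    substitution, and dependent function contracts `x:C₁ ↦ C₂`. -/
inductive Ctr where
  | pred : Env → Tm → Ctr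
  | fn : Vr → Ctr → Ctr → Ctr
/-- Delayed closing substitutions (environments): variables not in the
    domain are mapped to themselves. -/
inductive Env where
  | id : Env
  | cons : Vr → Tm → Env → Env
end

mutual
/-- Free variables of a term. -/
def Tm.fv : Tm → List Vr
  | .var x => [x]
  | .const _ => []
  | .lam x _ e => e.fv.filter (· ≠ x)
  | .app e₁ e₂ => e₁.fv ++ e₂.fv
  | .fix x _ e => e.fv.filter (· ≠ x)
  | .ite e₁ e₂ e₃ => e₁.fv ++ e₂.fv ++ e₃.fv
  | .err _ => []
  | .mon _ C e => C.fv ++ e.fv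
/-- Free variables of a contract. -/
def Ctr.fv : Ctr → List Vr
  | .pred σ e => fvClose σ e.fv
  | .fn x C₁ C₂ => C₁.fv ++ C₂.fv.filter (· ≠ x)
/-- `fvClose σ xs`: free variables of a term with free variables `xs`
    after closing up with `σ`. -/
def fvClose : Env → List Vr → List Vr
  | .id, xs => xs
  | .cons y v σ, xs =>
      fvClose σ (xs.filter (· ≠ y)) ++ (if y ∈ xs then v.fv else [])
end

mutual
/-- Capture-avoiding-enough substitution of a closed value for a variable. -/
def Tm.subst (x : Vr) (v : Tm) : Tm → Tm
  | .var y => if y = x then v else .var y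
  | .const k => .const k
  | .lam y T e => if y = x then .lam y T e else .lam y T (Tm.subst x v e)
  | .app e₁ e₂ => .app (Tm.subst x v e₁) (Tm.subst x v e₂)
  | .fix y T e => if y = x then .fix y T e else .fix y T (Tm.subst x v e)
  | .ite e₁ e₂ e₃ => .ite (Tm.subst x v e₁) (Tm.subst x v e₂) (Tm.subst x v e₃)
  | .err l => .err l
  | .mon l C e => .mon l (Ctr.subst x v C) (Tm.subst x v e)
/-- Substitution into contracts: substitution into a predicate contract is
    delayed into its closing substitution, and only recorded when the
    variable actually occurs free in the closed-up predicate. -/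
def Ctr.subst (x : Vr) (v : Tm) : Ctr → Ctr
  | .pred σ e => if x ∈ fvClose σ e.fv then .pred (.cons x v σ) e else .pred σ e
  | .fn y C₁ C₂ =>
      if y = x then .fn y (Ctr.subst x v C₁) C₂
      else .fn y (Ctr.subst x v C₁) (Ctr.subst x v C₂)
end

/-- Apply a delayed closing substitution to a term. -/
def Env.apply : Env → Tm → Tm
  | .id, e => e
  | .cons x v σ, e => σ.apply (Tm.subst x v e)

/-- Values: constants, lambdas, and function proxies. -/
inductive Value : Tm → Prop where
  | const {k} : Value (.const k)
  | lam {x T e} : Value (.lam x T e)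
  | proxy {l x C₁ C₂ v} : Value v → Value (.mon l (.fn x C₁ C₂) v)

/-- Typing contexts. -/
abbrev Ctx := List (Vr × Ty)

mutual
/-- Typing of terms. -/
inductive HasTy : Ctx → Tm → Ty → Prop where
  | var {Γ x T} : List.lookup x Γ = some T → HasTy Γ (.var x) T
  | const {Γ k} : HasTy Γ (.const k) k.ty
  | lam {Γ x T₁ e T₂} : HasTy ((x, T₁) :: Γ) e T₂ →
      HasTy Γ (.lam x T₁ e) (.arrow T₁ T₂)
  | app {Γ e₁ e₂ T₁ T₂} : HasTy Γ e₁ (.arrow T₁ T₂) → HasTy Γ e₂ T₁ →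
      HasTy Γ (.app e₁ e₂) T₂
  | fix {Γ x T e} : HasTy ((x, T) :: Γ) e T → HasTy Γ (.fix x T e) T
  | ite {Γ e₁ e₂ e₃ T} : HasTy Γ e₁ .bool → HasTy Γ e₂ T → HasTy Γ e₃ T →
      HasTy Γ (.ite e₁ e₂ e₃) T
  | err {Γ l T} : HasTy Γ (.err l) T
  | mon {Γ l C e T} : CtrTy Γ C T → HasTy Γ e T → HasTy Γ (.mon l C e) T
/-- Typing of contracts. -/
inductive CtrTy : Ctx → Ctr → Ty → Prop where
  | pred {Γ Γ' σ e B} : B.IsBase → EnvTy Γ' σ →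
      HasTy (Γ' ++ Γ) e (.arrow B .bool) → CtrTy Γ (.pred σ e) B
  | fn {Γ x C₁ C₂ T₁ T₂} : CtrTy Γ C₁ T₁ → CtrTy ((x, T₁) :: Γ) C₂ T₂ →
      CtrTy Γ (.fn x C₁ C₂) (.arrow T₁ T₂)
/-- Well-formed closing substitutions: each variable of the context is
    mapped to a closed value of the declared type. -/
inductive EnvTy : Ctx → Env → Prop where
  | id : EnvTy [] .id
  | cons {Γ x v T σ} : Value v → HasTy [] v T → EnvTy Γ σ →
      EnvTy ((x, T) :: Γ) (.cons x v σ)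
end

/-- Small-step reduction for classic CPCF. -/
inductive StepC : Tm → Tm → Prop where
  | beta {x T e v} : Value v → StepC (.app (.lam x T e) v) (Tm.subst x v e)
  | fix {x T e} : StepC (.fix x T e) (Tm.subst x (.fix x T e) e)
  | iteTrue {e₂ e₃} : StepC (.ite (.const (.bool true)) e₂ e₃) e₂
  | iteFalse {e₂ e₃} : StepC (.ite (.const (.bool false)) e₂ e₃) e₃
  | appL {e₁ e₁' e₂} : StepC e₁ e₁' → StepC (.app e₁ e₂) (.app e₁' e₂)
  | appR {v e₂ e₂'} : Value v → StepC e₂ e₂' → StepC (.app v e₂) (.app v e₂')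
  | ite {e₁ e₁' e₂ e₃} : StepC e₁ e₁' → StepC (.ite e₁ e₂ e₃) (.ite e₁' e₂ e₃)
  | appLRaise {l e₂} : StepC (.app (.err l) e₂) (.err l)
  | appRRaise {v l} : Value v → StepC (.app v (.err l)) (.err l)
  | iteRaise {l e₂ e₃} : StepC (.ite (.err l) e₂ e₃) (.err l)
  | monPred {l σ e v} : Value v →
      StepC (.mon l (.pred σ e) v) (.ite (.app (σ.apply e) v) v (.err l))
  | monApp {l x C₁ C₂ v₁ v₂} : Value v₁ → Value v₂ →
      StepC (.app (.mon l (.fn x C₁ C₂) v₁) v₂)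
            (.mon l (Ctr.subst x v₂ C₂) (.app v₁ (.mon l C₁ v₂)))
  | mon {l C e e'} : StepC e e' → StepC (.mon l C e) (.mon l C e')
  | monRaise {l C l'} : StepC (.mon l C (.err l')) (.err l)

/-! ### Auxiliary lemmas -/

theorem lookup_cons' (x y : Vr) (b : Ty) (l : Ctx) :
    List.lookup x ((y, b) :: l) = if x = y then some b else List.lookup x l := by
  by_cases h : x = y
  · simp [List.lookup, h]
  · have hb : (x == y) = false := by simp [h]
    rw [List.lookup, hb, if_neg h]

theorem lookup_append' (x : Vr) (l₁ l₂ : Ctx) :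
    List.lookup x (l₁ ++ l₂) = (List.lookup x l₁).or (List.lookup x l₂) := by
  induction l₁ with
  | nil => simp [List.lookup]
  | cons p l ih =>
    obtain ⟨y, b⟩ := p
    by_cases h : x = y <;> simp [lookup_cons', h, ih]

theorem lookup_eq_none_iff' (x : Vr) (l : Ctx) :
    List.lookup x l = none ↔ x ∉ l.map Prod.fst := by
  induction l with
  | nil => simp [List.lookup]
  | cons p l ih =>
    obtain ⟨y, b⟩ := p
    by_cases h : x = y <;> simp [lookup_cons', h, ih]

theorem lookup_some_mem' {x : Vr} {l : Ctx} {S : Ty} (h : List.lookup x l = some S) :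
    x ∈ l.map Prod.fst := by
  by_contra hc
  rw [(lookup_eq_none_iff' x l).mpr hc] at h
  cases h

/-- Domain of a delayed substitution. -/
def Env.dom : Env → List Vr
  | .id => []
  | .cons x _ σ => x :: σ.dom

theorem envTy_dom : ∀ {Γ : Ctx} {σ : Env}, EnvTy Γ σ → σ.dom = Γ.map Prod.fst
  | _, _, .id => rfl
  | _, _, .cons _ _ h => by simp [Env.dom, envTy_dom h]

theorem mem_fvClose : ∀ (σ : Env) (xs : List Vr) (z : Vr),
    z ∈ xs → z ∉ σ.dom → z ∈ fvClose σ xs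
  | .id, xs, z, hz, _ => hz
  | .cons y v σ, xs, z, hz, hd => by
    simp only [Env.dom, List.mem_cons, not_or] at hd
    simp only [fvClose, List.mem_append]
    exact Or.inl (mem_fvClose σ _ z (by simp [List.mem_filter, hz, hd.1]) hd.2)

mutual

theorem tm_fv_sub : ∀ (Γ : Ctx) (e : Tm) (T : Ty), HasTy Γ e T →
    ∀ z ∈ e.fv, z ∈ Γ.map Prod.fst
  | _, _, _, .var hl, z, hz => by
    simp only [Tm.fv, List.mem_singleton] at hz
    subst hz; exact lookup_some_mem' hl
  | _, _, _, .const, z, hz => by simp [Tm.fv] at hz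
  | _, _, _, @HasTy.lam Γ x T₁ e T₂ h, z, hz => by
    simp only [Tm.fv, List.mem_filter, decide_eq_true_eq] at hz
    have := tm_fv_sub _ _ _ h z hz.1
    simp only [List.map_cons, List.mem_cons] at this
    exact this.resolve_left hz.2
  | _, _, _, .app h₁ h₂, z, hz => by
    simp only [Tm.fv, List.mem_append] at hz
    exact hz.elim (tm_fv_sub _ _ _ h₁ z) (tm_fv_sub _ _ _ h₂ z)
  | _, _, _, @HasTy.fix Γ x T e h, z, hz => by
    simp only [Tm.fv, List.mem_filter, decide_eq_true_eq] at hz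
    have := tm_fv_sub _ _ _ h z hz.1
    simp only [List.map_cons, List.mem_cons] at this
    exact this.resolve_left hz.2
  | _, _, _, .ite h₁ h₂ h₃, z, hz => by
    simp only [Tm.fv, List.mem_append] at hz
    rcases hz with (hz | hz) | hz
    · exact tm_fv_sub _ _ _ h₁ z hz
    · exact tm_fv_sub _ _ _ h₂ z hz
    · exact tm_fv_sub _ _ _ h₃ z hz
  | _, _, _, .err, z, hz => by simp [Tm.fv] at hz
  | _, _, _, .mon hC he, z, hz => by
    simp only [Tm.fv, List.mem_append] at hz
    exact hz.elim (ctr_fv_sub _ _ _ hC z) (tm_fv_sub _ _ _ he z)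

theorem ctr_fv_sub : ∀ (Γ : Ctx) (C : Ctr) (T : Ty), CtrTy Γ C T →
    ∀ z ∈ C.fv, z ∈ Γ.map Prod.fst
  | _, _, _, @CtrTy.pred Γ Γ' σ e B _ hσ he, z, hz => by
    simp only [Ctr.fv] at hz
    have h1 : z ∉ σ.dom := fvClose_disj _ _ hσ _ z hz
    rw [envTy_dom hσ] at h1
    have h2 : z ∈ e.fv := fvClose_sub _ _ hσ _ z hz
    have h3 := tm_fv_sub _ _ _ he z h2
    simp only [List.map_append, List.mem_append] at h3
    exact h3.resolve_left h1
  | _, _, _, @CtrTy.fn Γ x C₁ C₂ T₁ T₂ h₁ h₂, z, hz => by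
    simp only [Ctr.fv, List.mem_append, List.mem_filter, decide_eq_true_eq] at hz
    rcases hz with hz | ⟨hz, hne⟩
    · exact ctr_fv_sub _ _ _ h₁ z hz
    · have := ctr_fv_sub _ _ _ h₂ z hz
      simp only [List.map_cons, List.mem_cons] at this
      exact this.resolve_left hne

theorem fvClose_sub : ∀ (Γ' : Ctx) (σ : Env), EnvTy Γ' σ →
    ∀ (xs : List Vr) (z : Vr), z ∈ fvClose σ xs → z ∈ xs
  | _, _, .id, xs, z, hz => hz
  | _, _, @EnvTy.cons Γ x v T σ _ hv hσ, xs, z, hz => by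
    simp only [fvClose, List.mem_append] at hz
    rcases hz with hz | hz
    · have := fvClose_sub _ _ hσ _ z hz
      simp only [List.mem_filter, decide_eq_true_eq] at this
      exact this.1
    · split at hz
      · exact absurd (tm_fv_sub _ _ _ hv z hz) (by simp)
      · simp at hz

theorem fvClose_disj : ∀ (Γ' : Ctx) (σ : Env), EnvTy Γ' σ →
    ∀ (xs : List Vr) (z : Vr), z ∈ fvClose σ xs → z ∉ σ.dom
  | _, _, .id, xs, z, hz => by simp [Env.dom]
  | _, _, @EnvTy.cons Γ x v T σ _ hv hσ, xs, z, hz => by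
    simp only [fvClose, List.mem_append] at hz
    rcases hz with hz | hz
    · have h1 := fvClose_disj _ _ hσ _ z hz
      have h2 := fvClose_sub _ _ hσ _ z hz
      simp only [List.mem_filter, decide_eq_true_eq] at h2
      simp [Env.dom, h1, h2.2]
    · split at hz
      · exact absurd (tm_fv_sub _ _ _ hv z hz) (by simp)
      · simp at hz

end
mutual

theorem weaken_tm : ∀ (Γ : Ctx) (e : Tm) (T : Ty), HasTy Γ e T → ∀ (Δ : Ctx),
    (∀ z ∈ e.fv, ∀ S, List.lookup z Γ = some S → List.lookup z Δ = some S) →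
    HasTy Δ e T
  | _, _, _, @HasTy.var Γ x T hl, Δ, hc =>
    .var (hc x (by simp [Tm.fv]) T hl)
  | _, _, _, .const, _, _ => .const
  | _, _, _, @HasTy.lam Γ x T₁ e T₂ h, Δ, hc => by
    refine .lam (weaken_tm _ _ _ h ((x, T₁) :: Δ) ?_)
    intro z hz S hl
    by_cases hzx : z = x
    · subst hzx; simpa [lookup_cons'] using hl
    · rw [lookup_cons', if_neg hzx] at hl ⊢
      exact hc z (by simp [Tm.fv, List.mem_filter, hz, hzx]) S hl
  | _, _, _, .app h₁ h₂, Δ, hc =>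
    .app (weaken_tm _ _ _ h₁ Δ fun z hz => hc z (by simp [Tm.fv, hz]))
         (weaken_tm _ _ _ h₂ Δ fun z hz => hc z (by simp [Tm.fv, hz]))
  | _, _, _, @HasTy.fix Γ x T e h, Δ, hc => by
    refine .fix (weaken_tm _ _ _ h ((x, T) :: Δ) ?_)
    intro z hz S hl
    by_cases hzx : z = x
    · subst hzx; simpa [lookup_cons'] using hl
    · rw [lookup_cons', if_neg hzx] at hl ⊢
      exact hc z (by simp [Tm.fv, List.mem_filter, hz, hzx]) S hl
  | _, _, _, .ite h₁ h₂ h₃, Δ, hc =>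
    .ite (weaken_tm _ _ _ h₁ Δ fun z hz => hc z (by simp [Tm.fv, hz]))
         (weaken_tm _ _ _ h₂ Δ fun z hz => hc z (by simp [Tm.fv, hz]))
         (weaken_tm _ _ _ h₃ Δ fun z hz => hc z (by simp [Tm.fv, hz]))
  | _, _, _, .err, _, _ => .err
  | _, _, _, .mon hC he, Δ, hc =>
    .mon (weaken_ctr _ _ _ hC Δ fun z hz => hc z (by simp [Tm.fv, hz]))
         (weaken_tm _ _ _ he Δ fun z hz => hc z (by simp [Tm.fv, hz]))

theorem weaken_ctr : ∀ (Γ : Ctx) (C : Ctr) (T : Ty), CtrTy Γ C T → ∀ (Δ : Ctx),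
    (∀ z ∈ C.fv, ∀ S, List.lookup z Γ = some S → List.lookup z Δ = some S) →
    CtrTy Δ C T
  | _, _, _, @CtrTy.pred Γ Γ' σ e B hB hσ he, Δ, hc => by
    refine .pred hB hσ (weaken_tm _ _ _ he (Γ' ++ Δ) ?_)
    intro z hz S hl
    rw [lookup_append'] at hl ⊢
    cases hcase : List.lookup z Γ' with
    | some S' => rw [hcase] at hl; exact hl
    | none =>
      rw [hcase] at hl
      have hl' : List.lookup z Γ = some S := hl
      show List.lookup z Δ = some S
      have hzd : z ∉ σ.dom := by
        rw [envTy_dom hσ]; exact (lookup_eq_none_iff' z Γ').mp hcase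
      exact hc z (show z ∈ fvClose σ e.fv from mem_fvClose σ e.fv z hz hzd) S hl'
  | _, _, _, @CtrTy.fn Γ x C₁ C₂ T₁ T₂ h₁ h₂, Δ, hc => by
    refine .fn (weaken_ctr _ _ _ h₁ Δ fun z hz => hc z (by simp [Ctr.fv, hz]))
      (weaken_ctr _ _ _ h₂ ((x, T₁) :: Δ) ?_)
    intro z hz S hl
    by_cases hzx : z = x
    · subst hzx; simpa [lookup_cons'] using hl
    · rw [lookup_cons', if_neg hzx] at hl ⊢
      exact hc z (by simp [Ctr.fv, List.mem_filter, hz, hzx]) S hl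

end
theorem lookup_mid {x : Vr} {Sv : Ty} {Γ₁ Γ₂ : Ctx} (hx : x ∉ Γ₁.map Prod.fst)
    {z : Vr} {S : Ty} (h : List.lookup z (Γ₁ ++ (x, Sv) :: Γ₂) = some S) :
    (z = x ∧ S = Sv) ∨ (z ≠ x ∧ List.lookup z (Γ₁ ++ Γ₂) = some S) := by
  rw [lookup_append'] at h
  by_cases hzx : z = x
  · subst hzx
    rw [(lookup_eq_none_iff' z Γ₁).mpr hx] at h
    have h' : List.lookup z ((z, Sv) :: Γ₂) = some S := h
    rw [lookup_cons', if_pos rfl] at h'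
    exact Or.inl ⟨rfl, (Option.some_inj.mp h').symm⟩
  · refine Or.inr ⟨hzx, ?_⟩
    rw [lookup_append']
    cases hcase : List.lookup z Γ₁ with
    | some S' => rw [hcase] at h; exact h
    | none =>
      rw [hcase] at h
      have h' : List.lookup z ((x, Sv) :: Γ₂) = some S := h
      rw [lookup_cons', if_neg hzx] at h'
      exact h'

mutual

theorem subst_tm (x : Vr) (v : Tm) (Sv : Ty) (hval : Value v) (hv : HasTy [] v Sv) :
    ∀ (Γ₀ : Ctx) (e : Tm) (T : Ty), HasTy Γ₀ e T → ∀ (Γ₁ Γ₂ : Ctx),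
      Γ₀ = Γ₁ ++ (x, Sv) :: Γ₂ → x ∉ Γ₁.map Prod.fst →
      HasTy (Γ₁ ++ Γ₂) (Tm.subst x v e) T
  | _, _, _, @HasTy.var _ y T hl, Γ₁, Γ₂, hΓ, hx => by
    subst hΓ
    simp only [Tm.subst]
    rcases lookup_mid hx hl with ⟨hyx, hTS⟩ | ⟨hyx, hl'⟩
    · subst hyx; subst hTS
      rw [if_pos rfl]
      exact weaken_tm _ _ _ hv (Γ₁ ++ Γ₂) (by intro z hz S hlz; simp [List.lookup] at hlz)
    · rw [if_neg hyx]
      exact .var hl'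
  | _, _, _, .const, Γ₁, Γ₂, hΓ, hx => by subst hΓ; exact .const
  | _, _, _, @HasTy.lam _ y T₁ e T₂ h, Γ₁, Γ₂, hΓ, hx => by
    subst hΓ
    simp only [Tm.subst]
    by_cases hyx : y = x
    · rw [if_pos hyx]; subst hyx
      refine .lam (weaken_tm _ _ _ h ((y, T₁) :: (Γ₁ ++ Γ₂)) ?_)
      intro z hz S hlz
      by_cases hzy : z = y
      · subst hzy
        have h' : List.lookup z ((z, T₁) :: (Γ₁ ++ (z, Sv) :: Γ₂)) = some S := hlz
        rw [lookup_cons', if_pos rfl] at h'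
        rw [lookup_cons', if_pos rfl]; exact h'
      · have h' : List.lookup z (Γ₁ ++ (y, Sv) :: Γ₂) = some S := by
          have := hlz; rwa [lookup_cons', if_neg hzy] at this
        rcases lookup_mid hx h' with ⟨hzx, _⟩ | ⟨_, h''⟩
        · exact absurd hzx hzy
        · rw [lookup_cons', if_neg hzy]; exact h''
    · rw [if_neg hyx]
      exact .lam (subst_tm x v Sv hval hv _ _ _ h ((y, T₁) :: Γ₁) Γ₂ rfl
        (by simp only [List.map_cons, List.mem_cons, not_or]
            exact ⟨fun hh => hyx hh.symm, hx⟩))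
  | _, _, _, .app h₁ h₂, Γ₁, Γ₂, hΓ, hx => by
    subst hΓ
    exact .app (subst_tm x v Sv hval hv _ _ _ h₁ Γ₁ Γ₂ rfl hx)
         (subst_tm x v Sv hval hv _ _ _ h₂ Γ₁ Γ₂ rfl hx)
  | _, _, _, @HasTy.fix _ y T e h, Γ₁, Γ₂, hΓ, hx => by
    subst hΓ
    simp only [Tm.subst]
    by_cases hyx : y = x
    · rw [if_pos hyx]; subst hyx
      refine .fix (weaken_tm _ _ _ h ((y, T) :: (Γ₁ ++ Γ₂)) ?_)
      intro z hz S hlz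
      by_cases hzy : z = y
      · subst hzy
        have h' : List.lookup z ((z, T) :: (Γ₁ ++ (z, Sv) :: Γ₂)) = some S := hlz
        rw [lookup_cons', if_pos rfl] at h'
        rw [lookup_cons', if_pos rfl]; exact h'
      · have h' : List.lookup z (Γ₁ ++ (y, Sv) :: Γ₂) = some S := by
          have := hlz; rwa [lookup_cons', if_neg hzy] at this
        rcases lookup_mid hx h' with ⟨hzx, _⟩ | ⟨_, h''⟩
        · exact absurd hzx hzy
        · rw [lookup_cons', if_neg hzy]; exact h''
    · rw [if_neg hyx]
      exact .fix (subst_tm x v Sv hval hv _ _ _ h ((y, T) :: Γ₁) Γ₂ rfl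
        (by simp only [List.map_cons, List.mem_cons, not_or]
            exact ⟨fun hh => hyx hh.symm, hx⟩))
  | _, _, _, .ite h₁ h₂ h₃, Γ₁, Γ₂, hΓ, hx => by
    subst hΓ
    exact .ite (subst_tm x v Sv hval hv _ _ _ h₁ Γ₁ Γ₂ rfl hx)
         (subst_tm x v Sv hval hv _ _ _ h₂ Γ₁ Γ₂ rfl hx)
         (subst_tm x v Sv hval hv _ _ _ h₃ Γ₁ Γ₂ rfl hx)
  | _, _, _, .err, Γ₁, Γ₂, hΓ, hx => by subst hΓ; exact .err
  | _, _, _, .mon hC he, Γ₁, Γ₂, hΓ, hx => by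
    subst hΓ
    exact .mon (subst_ctr x v Sv hval hv _ _ _ hC Γ₁ Γ₂ rfl hx)
         (subst_tm x v Sv hval hv _ _ _ he Γ₁ Γ₂ rfl hx)

theorem subst_ctr (x : Vr) (v : Tm) (Sv : Ty) (hval : Value v) (hv : HasTy [] v Sv) :
    ∀ (Γ₀ : Ctx) (C : Ctr) (T : Ty), CtrTy Γ₀ C T → ∀ (Γ₁ Γ₂ : Ctx),
      Γ₀ = Γ₁ ++ (x, Sv) :: Γ₂ → x ∉ Γ₁.map Prod.fst →
      CtrTy (Γ₁ ++ Γ₂) (Ctr.subst x v C) T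
  | _, _, _, @CtrTy.pred _ Γ'' σ e B hB hσ he, Γ₁, Γ₂, hΓ, hx => by
    subst hΓ
    simp only [Ctr.subst]
    by_cases hmem : x ∈ fvClose σ e.fv
    · rw [if_pos hmem]
      refine CtrTy.pred (Γ' := (x, Sv) :: Γ'') hB (.cons hval hv hσ) ?_
      have hxd : x ∉ Γ''.map Prod.fst := by
        have := fvClose_disj _ _ hσ e.fv x hmem
        rwa [envTy_dom hσ] at this
      refine weaken_tm _ _ _ he ((x, Sv) :: (Γ'' ++ (Γ₁ ++ Γ₂))) ?_
      intro z hz S hlz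
      rw [lookup_append'] at hlz
      cases hcase : List.lookup z Γ'' with
      | some S' =>
        rw [hcase] at hlz
        have hzx : z ≠ x := fun hzx => hxd (hzx ▸ lookup_some_mem' hcase)
        rw [lookup_cons', if_neg hzx, lookup_append', hcase]
        exact hlz
      | none =>
        rw [hcase] at hlz
        have hlz' : List.lookup z (Γ₁ ++ (x, Sv) :: Γ₂) = some S := hlz
        rcases lookup_mid hx hlz' with ⟨hzx, hS⟩ | ⟨hzx, h''⟩
        · subst hzx; subst hS
          rw [lookup_cons', if_pos rfl]
        · rw [lookup_cons', if_neg hzx, lookup_append', hcase]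
          exact h''
    · rw [if_neg hmem]
      refine CtrTy.pred hB hσ (weaken_tm _ _ _ he (Γ'' ++ (Γ₁ ++ Γ₂)) ?_)
      intro z hz S hlz
      rw [lookup_append'] at hlz ⊢
      cases hcase : List.lookup z Γ'' with
      | some S' => rw [hcase] at hlz; exact hlz
      | none =>
        rw [hcase] at hlz
        have hzd : z ∉ σ.dom := by
          rw [envTy_dom hσ]; exact (lookup_eq_none_iff' z Γ'').mp hcase
        have hzf : z ∈ fvClose σ e.fv := mem_fvClose σ e.fv z hz hzd
        have hzx : z ≠ x := fun hzx => hmem (hzx ▸ hzf)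
        have hlz' : List.lookup z (Γ₁ ++ (x, Sv) :: Γ₂) = some S := hlz
        rcases lookup_mid hx hlz' with ⟨hzx', _⟩ | ⟨_, h''⟩
        · exact absurd hzx' hzx
        · exact h''
  | _, _, _, @CtrTy.fn _ y C₁ C₂ T₁ T₂ h₁ h₂, Γ₁, Γ₂, hΓ, hx => by
    subst hΓ
    simp only [Ctr.subst]
    by_cases hyx : y = x
    · rw [if_pos hyx]
      have hh₁ := subst_ctr x v Sv hval hv _ _ _ h₁ Γ₁ Γ₂ rfl hx
      subst hyx
      refine .fn hh₁ (weaken_ctr _ _ _ h₂ ((y, T₁) :: (Γ₁ ++ Γ₂)) ?_)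
      intro z hz S hlz
      by_cases hzy : z = y
      · subst hzy
        have h' : List.lookup z ((z, T₁) :: (Γ₁ ++ (z, Sv) :: Γ₂)) = some S := hlz
        rw [lookup_cons', if_pos rfl] at h'
        rw [lookup_cons', if_pos rfl]; exact h'
      · have h' : List.lookup z (Γ₁ ++ (y, Sv) :: Γ₂) = some S := by
          have := hlz; rwa [lookup_cons', if_neg hzy] at this
        rcases lookup_mid hx h' with ⟨hzx, _⟩ | ⟨_, h''⟩
        · exact absurd hzx hzy
        · rw [lookup_cons', if_neg hzy]; exact h''
    · rw [if_neg hyx]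
      refine .fn (subst_ctr x v Sv hval hv _ _ _ h₁ Γ₁ Γ₂ rfl hx)
        (subst_ctr x v Sv hval hv _ _ _ h₂ ((y, T₁) :: Γ₁) Γ₂ rfl
          (by simp only [List.map_cons, List.mem_cons, not_or]
              exact ⟨fun hh => hyx hh.symm, hx⟩))

end

theorem closing_aux : ∀ (Γ' : Ctx) (σ : Env), EnvTy Γ' σ →
    ∀ (Γ : Ctx) (e : Tm) (T : Ty), HasTy (Γ' ++ Γ) e T → HasTy Γ (σ.apply e) T
  | _, _, .id, _, _, _, he => he
  | _, _, @EnvTy.cons Γ₀ x v Tv σ hval hv hσ, Γ, e, T, he =>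
    closing_aux _ _ hσ Γ _ T
      (subst_tm x v Tv hval hv _ _ _ he [] (Γ₀ ++ Γ) rfl (by simp))

/-- Closing substitution lemma: applying a well-formed closing substitution
    `σ` (mapping each variable declared in `Γ'` to a closed value of the
    declared type) closes up exactly the variables of `Γ'`. -/
theorem closing_substitution {Γ' Γ : Ctx} {σ : Env} {e : Tm} {T : Ty}
    (hσ : EnvTy Γ' σ) (he : HasTy (Γ' ++ Γ) e T) :
    HasTy Γ (σ.apply e) T := by
  exact closing_aux Γ' σ hσ Γ e T he
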